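/- (Schur concavity of Shannon entropy.) If p and q are probability vectors of length n and p majorizes q (p ≻ q), then H(p) ≤ H(q). -/

import Mathlib

/-! Sort `p` and `q` decreasingly into `x` and `y`; majorization says that the prefix sums
of `x` dominate those of `y`, with equal totals. The tangent line of `t ↦ t log t` at `y i`
gives `x i log x i - y i log y i ≥ (log y i + 1) (x i - y i)`, and summation by parts writes
the sum of the right-hand sides as a combination of the prefix-sum differences with the
nonnegative weights `log y i - log y (i + 1)`. Where `y` vanishes (slope `-∞`) the prefix sums of
`y` are complete, hence so are those of `x`, and `x` vanishes too. -/

/-- The Shannon entropy `H(p) = −Σ_i p_i log p_i` (with `0·log 0 = 0`,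
which holds since `Real.log 0 = 0`). -/
noncomputable def shannonEntropy {n : ℕ} (p : Fin n → ℝ) : ℝ :=
  -∑ i, p i * Real.log (p i)

/-- The sum of the `k` largest entries of `p`, i.e. the maximum of the sums of `p`
over subsets of cardinality `k` (for `k ≤ n` this supremum is a maximum). -/
noncomputable def sumKLargest {n : ℕ} (p : Fin n → ℝ) (k : ℕ) : ℝ :=
  sSup {x : ℝ | ∃ A : Finset (Fin n), A.card = k ∧ x = ∑ i ∈ A, p i}

/-- `p` majorizes `q`: for every `k`, the sum of the `k` largest entries of `p` is at
least the sum of the `k` largest entries of `q`. -/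
def Majorizes {n : ℕ} (p q : Fin n → ℝ) : Prop :=
  ∀ k ≤ n, sumKLargest q k ≤ sumKLargest p k

open Finset Real

theorem Finset.sum_le_sum_range_card_of_antitone {M : Type*} [AddCommMonoid M] [PartialOrder M]
    [IsOrderedCancelAddMonoid M] {x : ℕ → M} (hx : Antitone x) (s : Finset ℕ) :
    ∑ i ∈ s, x i ≤ ∑ i ∈ range #s, x i := by
  rw [← sum_sdiff_le_sum_sdiff]
  calc ∑ i ∈ s \ range #s, x i
      ≤ #(s \ range #s) • x #s :=
        sum_le_card_nsmul _ _ _ fun i hi => hx (by simpa using (mem_sdiff.1 hi).2)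
    _ = #(range #s \ s) • x #s := by rw [card_sdiff_comm (card_range _).symm]
    _ ≤ ∑ i ∈ range #s \ s, x i :=
        card_nsmul_le_sum _ _ _ fun i hi => hx (mem_range.1 (mem_sdiff.1 hi).1).le

theorem Finset.sum_range_mul_nonneg_of_sum_range_nonneg {R : Type*} [CommRing R] [LinearOrder R]
    [IsStrictOrderedRing R] {c d : ℕ → R} {n : ℕ}
    (hd : ∀ k ≤ n, 0 ≤ ∑ i ∈ range k, d i) (hdn : ∑ i ∈ range n, d i = 0)
    (hc : ∀ i, i + 1 < n → 0 < ∑ j ∈ range (i + 1), d j → c (i + 1) ≤ c i) :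
    0 ≤ ∑ i ∈ range n, c i * d i := by
  have hterm : ∀ i ∈ range (n - 1), (c (i + 1) - c i) * ∑ j ∈ range (i + 1), d j ≤ 0 := by
    intro i hi
    have hin : i + 1 < n := by rw [mem_range] at hi; omega
    rcases (hd (i + 1) hin.le).eq_or_lt with hzero | hpos
    · rw [← hzero, mul_zero]
    · exact mul_nonpos_of_nonpos_of_nonneg (sub_nonpos.2 (hc i hin hpos)) hpos.le
  have hparts := sum_range_by_parts c d n
  simp only [smul_eq_mul, hdn, mul_zero, zero_sub] at hparts
  rw [hparts]
  exact neg_nonneg.2 (sum_nonpos hterm)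

theorem Finset.sum_range_eq_of_antitone_of_eq_zero {M : Type*} [AddCommMonoid M]
    [PartialOrder M] {y : ℕ → M} (hy : Antitone y) (hy0 : ∀ i, 0 ≤ y i) {k n : ℕ}
    (hkn : k ≤ n) (hk : y k = 0) :
    ∑ i ∈ range k, y i = ∑ i ∈ range n, y i := by
  rw [← sum_range_add_sum_Ico _ hkn, sum_eq_zero (s := Ico k n) fun i hi => ?_, add_zero]
  exact le_antisymm (hk ▸ hy (mem_Ico.1 hi).1) (hy0 i)

theorem Real.log_add_one_mul_sub_le {a b : ℝ} (ha : 0 ≤ a) (hb : 0 < b) :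
    (log b + 1) * (a - b) ≤ a * log a - b * log b := by
  rcases ha.eq_or_lt with rfl | ha
  · simp only [zero_sub, mul_neg, log_zero, mul_zero]
    linarith
  · have h := mul_le_mul_of_nonneg_left (self_sub_one_le_mul_log (div_pos ha hb).le) hb.le
    rw [log_div ha.ne' hb.ne', mul_sub, ← mul_assoc, mul_div_cancel₀ a hb.ne', mul_one] at h
    linear_combination h

theorem sum_range_mul_log_le_of_sum_range_le {x y : ℕ → ℝ} {n : ℕ} (hx : ∀ i, 0 ≤ x i)
    (hy : Antitone y) (hy0 : ∀ i, 0 ≤ y i)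
    (hxy : ∀ k ≤ n, ∑ i ∈ range k, y i ≤ ∑ i ∈ range k, x i)
    (htot : ∑ i ∈ range n, x i = ∑ i ∈ range n, y i) :
    ∑ i ∈ range n, y i * log (y i) ≤ ∑ i ∈ range n, x i * log (x i) := by
  have hX : ∀ k ≤ n, ∑ i ∈ range k, x i ≤ ∑ i ∈ range n, x i := fun k hk =>
    sum_le_sum_of_subset_of_nonneg (range_subset_range.2 hk) fun i _ _ => hx i
  have hY : ∀ k ≤ n, y k = 0 → ∑ i ∈ range k, y i = ∑ i ∈ range n, y i := fun k hk =>
    sum_range_eq_of_antitone_of_eq_zero hy hy0 hk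
  have hxy0 : ∀ k < n, y k = 0 → x k = 0 := by
    intro k hk hyk
    have := hX (k + 1) hk
    rw [sum_range_succ] at this
    linarith [hY k hk.le hyk, hxy k hk.le, hx k]
  have htangent : ∀ i ∈ range n,
      (log (y i) + 1) * (x i - y i) ≤ x i * log (x i) - y i * log (y i) := by
    intro i hi
    rcases (hy0 i).eq_or_lt with hyi | hyi
    · rw [hxy0 i (mem_range.1 hi) hyi.symm, ← hyi]
      simp
    · exact log_add_one_mul_sub_le (hx i) hyi
  have habel : 0 ≤ ∑ i ∈ range n, (log (y i) + 1) * (x i - y i) := by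
    refine sum_range_mul_nonneg_of_sum_range_nonneg (fun k hk => ?_) ?_ fun i hin hpos => ?_
    · rw [sum_sub_distrib, sub_nonneg]; exact hxy k hk
    · rw [sum_sub_distrib, sub_eq_zero]; exact htot
    · have hyi : 0 < y (i + 1) := by
        refine (hy0 _).lt_of_ne fun hzero => ?_
        rw [sum_sub_distrib, hY (i + 1) hin.le hzero.symm] at hpos
        linarith [hX (i + 1) hin.le]
      linarith [log_le_log hyi (hy (Nat.le_succ i))]
  have := sum_le_sum htangent
  rw [sum_sub_distrib] at this
  linarith

theorem sumKLargest_eq_sum_range {n k : ℕ} {p : Fin n → ℝ} {x : ℕ → ℝ} (hx : Antitone x)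
    (τ : Equiv.Perm (Fin n)) (hxp : ∀ i : Fin n, x i = p (τ i)) (hk : k ≤ n) :
    sumKLargest p k = ∑ i ∈ range k, x i := by
  refine IsGreatest.csSup_eq
    ⟨⟨univ.map ((Fin.castLEEmb hk).trans τ.toEmbedding), by simp, ?_⟩, ?_⟩
  · rw [sum_map, ← Fin.sum_univ_eq_sum_range]
    exact sum_congr rfl fun j _ => hxp (Fin.castLE hk j)
  · rintro _ ⟨A, rfl, rfl⟩
    set e := τ.symm.toEmbedding.trans Fin.valEmbedding
    have hsum : ∑ i ∈ A, p i = ∑ i ∈ A.map e, x i := by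
      rw [sum_map]
      exact sum_congr rfl fun i _ => by simp [e, hxp]
    rw [hsum, ← card_map e]
    exact sum_le_sum_range_card_of_antitone hx _

noncomputable def decreasingRearrangement {α : Type*} [LinearOrder α] [Zero α] {n : ℕ}
    (p : Fin n → α) (i : ℕ) : α :=
  if h : i < n then p (Tuple.sort p (Fin.rev ⟨i, h⟩)) else 0

section decreasingRearrangement

variable {α : Type*} [LinearOrder α] [Zero α] {n : ℕ} (p : Fin n → α)

theorem decreasingRearrangement_val (i : Fin n) :
    decreasingRearrangement p i = p ((Fin.revPerm.trans (Tuple.sort p)) i) := by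
  simp [decreasingRearrangement]

theorem decreasingRearrangement_nonneg (hp : ∀ i, 0 ≤ p i) (i : ℕ) :
    0 ≤ decreasingRearrangement p i := by
  unfold decreasingRearrangement
  split_ifs
  exacts [hp _, le_rfl]

theorem antitone_decreasingRearrangement (hp : ∀ i, 0 ≤ p i) :
    Antitone (decreasingRearrangement p) := by
  intro i j hij
  unfold decreasingRearrangement
  split_ifs with hj hi hi
  · exact Tuple.monotone_sort p (Fin.rev_le_rev.2 (Fin.mk_le_mk.2 hij))
  · omega
  · exact hp _
  · exact le_rfl

theorem sum_range_decreasingRearrangement {M : Type*} [AddCommMonoid M] (f : α → M) :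
    ∑ i ∈ range n, f (decreasingRearrangement p i) = ∑ i, f (p i) := by
  rw [← Fin.sum_univ_eq_sum_range (fun i => f (decreasingRearrangement p i))]
  simp only [decreasingRearrangement_val]
  exact Equiv.sum_comp _ (f ∘ p)

end decreasingRearrangement

theorem sumKLargest_eq_sum_range_decreasingRearrangement {n k : ℕ} {p : Fin n → ℝ}
    (hp : ∀ i, 0 ≤ p i) (hk : k ≤ n) :
    sumKLargest p k = ∑ i ∈ range k, decreasingRearrangement p i :=
  sumKLargest_eq_sum_range (antitone_decreasingRearrangement p hp) _
    (decreasingRearrangement_val p) hk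

/-- **Schur concavity of the Shannon entropy.**  If the probability vector `p`
majorizes the probability vector `q`, then `H(p) ≤ H(q)`. -/
theorem shannonEntropy_le_of_majorizes
    (n : ℕ) (p q : Fin n → ℝ)
    (hp0 : ∀ i, 0 ≤ p i) (hp1 : ∑ i, p i = 1)
    (hq0 : ∀ i, 0 ≤ q i) (hq1 : ∑ i, q i = 1)
    (hmaj : Majorizes p q) :
    shannonEntropy p ≤ shannonEntropy q := by
  have hprefix : ∀ k ≤ n, ∑ i ∈ range k, decreasingRearrangement q i ≤
      ∑ i ∈ range k, decreasingRearrangement p i := fun k hk => by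
    rw [← sumKLargest_eq_sum_range_decreasingRearrangement hp0 hk,
      ← sumKLargest_eq_sum_range_decreasingRearrangement hq0 hk]
    exact hmaj k hk
  have htot : ∑ i ∈ range n, decreasingRearrangement p i =
      ∑ i ∈ range n, decreasingRearrangement q i :=
    (sum_range_decreasingRearrangement p id).trans
      (hp1.trans (hq1.symm.trans (sum_range_decreasingRearrangement q id).symm))
  have h := sum_range_mul_log_le_of_sum_range_le
    (decreasingRearrangement_nonneg p hp0) (antitone_decreasingRearrangement q hq0)
    (decreasingRearrangement_nonneg q hq0) hprefix htot
  rw [sum_range_decreasingRearrangement p fun t => t * log t,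
    sum_range_decreasingRearrangement q fun t => t * log t] at h
  exact neg_le_neg h
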